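/- arXiv:2505.03990 — 2 statements merged into one kernel-verified Lean document; each statement's English description precedes it below -/
import Mathlib

section
/- Combining the above identities: if m' ~ MVN(m, Φ) with Φ positive-definite diagonal and S − Φ positive definite, then E_{m'}[ f_N(y; m', Σ/2 + S − Φ)/(2^dπ^{d/2}|Σ|^{1/2}) − f_N(y; m', Σ + S − Φ)² ] = f_N(y; m, Σ/2 + S)/(2^dπ^{d/2}|Σ|^{1/2}) − f_N(y; m, (Σ + S + Φ)/2)/(2^dπ^{d/2}|Σ + S − Φ|^{1/2}). -/
open Matrix MeasureTheory Real

noncomputable def gaussPdf {ι : Type*} [Fintype ι] [DecidableEq ι]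
    (y μ : ι → ℝ) (S : Matrix ι ι ℝ) : ℝ :=
  ((2 * Real.pi) ^ (Fintype.card ι) * S.det) ^ (-(1:ℝ)/2) *
    Real.exp (-(1/2) * ((y - μ) ⬝ᵥ (S⁻¹ *ᵥ (y - μ))))

variable {d : ℕ}

lemma symm_of_posDef {M : Matrix (Fin d) (Fin d) ℝ} (h : M.PosDef) : Mᵀ = M := by
  simpa [Matrix.IsHermitian] using h.isHermitian

lemma dmv_swap (M : Matrix (Fin d) (Fin d) ℝ) (v w : Fin d → ℝ) :
    v ⬝ᵥ (M *ᵥ w) = w ⬝ᵥ (Mᵀ *ᵥ v) := by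
  rw [Matrix.dotProduct_mulVec, ← Matrix.mulVec_transpose, dotProduct_comm]

lemma mvd_mv (M N : Matrix (Fin d) (Fin d) ℝ) (v w : Fin d → ℝ) :
    (M *ᵥ v) ⬝ᵥ (N *ᵥ w) = v ⬝ᵥ ((Mᵀ * N) *ᵥ w) := by
  rw [← Matrix.mulVec_mulVec, dmv_swap (Mᵀ), Matrix.transpose_transpose, dotProduct_comm]

lemma complete_square {A B : Matrix (Fin d) (Fin d) ℝ} (hA : Aᵀ = A) (hB : Bᵀ = B)
    (hU : IsUnit (A + B).det) (a b x : Fin d → ℝ) :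
    (x - a) ⬝ᵥ (A *ᵥ (x - a)) + (x - b) ⬝ᵥ (B *ᵥ (x - b)) =
      (x - (A + B)⁻¹ *ᵥ (A *ᵥ a + B *ᵥ b)) ⬝ᵥ ((A + B) *ᵥ (x - (A + B)⁻¹ *ᵥ (A *ᵥ a + B *ᵥ b)))
        + (a - b) ⬝ᵥ ((A * (A + B)⁻¹ * B) *ᵥ (a - b)) := by
  set G := (A + B)⁻¹ with hGdef
  have hGt : Gᵀ = G := by
    rw [hGdef, Matrix.transpose_nonsing_inv, Matrix.transpose_add, hA, hB]
  have h1 : (A + B) * G = 1 := Matrix.mul_nonsing_inv _ hU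
  have h2 : G * (A + B) = 1 := Matrix.nonsing_inv_mul _ hU
  have hPt : (B * G * B)ᵀ = B * G * B := by
    rw [Matrix.transpose_mul, Matrix.transpose_mul, hGt, hB, Matrix.mul_assoc]
  have hK1 : A * G * B = B - B * G * B := by
    have : (A + B) * G * B = B := by rw [h1, Matrix.one_mul]
    rw [Matrix.add_mul, Matrix.add_mul] at this
    linear_combination (norm := noncomm_ring) this
  have hK2 : B * G * A = B - B * G * B := by
    have : B * (G * (A + B)) = B := by rw [h2, Matrix.mul_one]
    rw [Matrix.mul_add, Matrix.mul_add, ← Matrix.mul_assoc, ← Matrix.mul_assoc] at this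
    linear_combination (norm := noncomm_ring) this
  have hAGA : A * G * A = A - B + B * G * B := by
    have : A * (G * (A + B)) = A := by rw [h2, Matrix.mul_one]
    rw [Matrix.mul_add, Matrix.mul_add, ← Matrix.mul_assoc, ← Matrix.mul_assoc, hK1] at this
    linear_combination (norm := noncomm_ring) this
  set s := A *ᵥ a + B *ᵥ b with hsdef
  have hc : (A + B) *ᵥ (G *ᵥ s) = s := by
    rw [Matrix.mulVec_mulVec, h1, Matrix.one_mulVec]
  -- expand everything
  have swapB : b ⬝ᵥ (B *ᵥ a) = a ⬝ᵥ (B *ᵥ b) := by rw [dmv_swap, hB]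
  have swapP : b ⬝ᵥ ((B * G * B) *ᵥ a) = a ⬝ᵥ ((B * G * B) *ᵥ b) := by rw [dmv_swap, hPt]
  have swapAx : a ⬝ᵥ (A *ᵥ x) = x ⬝ᵥ (A *ᵥ a) := by rw [dmv_swap, hA]
  have swapBx : b ⬝ᵥ (B *ᵥ x) = x ⬝ᵥ (B *ᵥ b) := by rw [dmv_swap, hB]
  have hcs : (G *ᵥ s) ⬝ᵥ s =
      a ⬝ᵥ (A *ᵥ a) - a ⬝ᵥ (B *ᵥ a) + a ⬝ᵥ ((B * G * B) *ᵥ a) + 2 * (a ⬝ᵥ (B *ᵥ b))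
        - 2 * (a ⬝ᵥ ((B * G * B) *ᵥ b)) + b ⬝ᵥ ((B * G * B) *ᵥ b) := by
    rw [dotProduct_comm]
    rw [hsdef]
    simp only [Matrix.mulVec_add, dotProduct_add, add_dotProduct,
      mvd_mv, Matrix.mulVec_mulVec, hA, hB]
    rw [← Matrix.mul_assoc, ← Matrix.mul_assoc, ← Matrix.mul_assoc, ← Matrix.mul_assoc]
    rw [hAGA, hK1, hK2]
    simp only [Matrix.sub_mulVec, Matrix.add_mulVec, dotProduct_sub, dotProduct_add,
      Matrix.mulVec_mulVec]
    rw [swapB, swapP]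
    ring
  have hxc : (x - G *ᵥ s) ⬝ᵥ ((A + B) *ᵥ (x - G *ᵥ s)) =
      x ⬝ᵥ (A *ᵥ x) + x ⬝ᵥ (B *ᵥ x) - 2 * (x ⬝ᵥ (A *ᵥ a)) - 2 * (x ⬝ᵥ (B *ᵥ b))
        + (G *ᵥ s) ⬝ᵥ s := by
    rw [Matrix.mulVec_sub, hc, dotProduct_sub, sub_dotProduct, sub_dotProduct]
    have h3 : (G *ᵥ s) ⬝ᵥ ((A + B) *ᵥ x) = x ⬝ᵥ s := by
      rw [dmv_swap, Matrix.transpose_add, hA, hB, hc]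
    rw [h3, hsdef]
    simp only [Matrix.add_mulVec, dotProduct_add]
    ring
  have hKs : A * G * B = B - B * G * B := hK1
  rw [hxc, hcs, hKs]
  simp only [Matrix.mulVec_sub, Matrix.sub_mulVec, dotProduct_sub, sub_dotProduct]
  rw [swapB, swapP, swapAx, swapBx]
  ring

lemma std_gauss_integrable :
    Integrable (fun v : Fin d → ℝ => rexp (-(1/2) * (v ⬝ᵥ v))) := by
  have : (fun v : Fin d → ℝ => rexp (-(1/2) * (v ⬝ᵥ v)))
      = fun v : Fin d → ℝ => ∏ i, rexp (-(1/2) * (v i)^2) := by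
    funext v
    rw [← Real.exp_sum]
    congr 1
    simp [dotProduct, Finset.mul_sum, sq]
  rw [this]
  exact Integrable.fintype_prod fun i => integrable_exp_neg_mul_sq (by norm_num)

lemma std_gauss_integral :
    ∫ v : Fin d → ℝ, rexp (-(1/2) * (v ⬝ᵥ v)) = Real.sqrt (2*π) ^ d := by
  have : (fun v : Fin d → ℝ => rexp (-(1/2) * (v ⬝ᵥ v)))
      = fun v : Fin d → ℝ => ∏ i, rexp (-(1/2) * (v i)^2) := by
    funext v
    rw [← Real.exp_sum]
    congr 1
    simp [dotProduct, Finset.mul_sum, sq]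
  rw [this, volume_pi, integral_fintype_prod_eq_pow (ι := Fin d) (fun t : ℝ => rexp (-(1/2) * t^2))]
  have : ∫ t : ℝ, rexp (-(1/2) * t^2) = Real.sqrt (2*π) := by
    have := integral_gaussian (1/2 : ℝ)
    rw [this]
    norm_num [mul_comm]
  rw [this]
  simp

open scoped MatrixOrder

section quad
variable {A : Matrix (Fin d) (Fin d) ℝ} (hA : A.PosDef)

include hA in
lemma sqrt_det_facts :
    let B := CFC.sqrt A
    Bᵀ = B ∧ B * B = A ∧ B.det = Real.sqrt A.det ∧ 0 < B.det := by
  intro B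
  have hBsd : B.PosSemidef := (CFC.sqrt_nonneg A).posSemidef
  have hBt : Bᵀ = B := by simpa [Matrix.IsHermitian] using hBsd.isHermitian
  have hBB : B * B = A := CFC.sqrt_mul_sqrt_self A hA.posSemidef.nonneg
  have hdetB2 : B.det * B.det = A.det := by rw [← Matrix.det_mul, hBB]
  have hdetBnn : 0 ≤ B.det := by
    rw [hBsd.isHermitian.det_eq_prod_eigenvalues]
    exact Finset.prod_nonneg fun i _ => hBsd.eigenvalues_nonneg i
  have hdetBpos : 0 < B.det := by
    rcases hdetBnn.lt_or_eq with h | h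
    · exact h
    · exfalso; have := hA.det_pos; rw [← hdetB2, ← h, mul_zero] at this; exact lt_irrefl _ this
  exact ⟨hBt, hBB, by rw [← hdetB2, Real.sqrt_mul_self hdetBnn], hdetBpos⟩

include hA in
lemma quad_eq_sq (x : Fin d → ℝ) :
    x ⬝ᵥ (A *ᵥ x) = (CFC.sqrt A *ᵥ x) ⬝ᵥ (CFC.sqrt A *ᵥ x) := by
  obtain ⟨hBt, hBB, -, -⟩ := sqrt_det_facts hA
  rw [mvd_mv, hBt, hBB]

lemma gauss_cont : Continuous (fun v : Fin d → ℝ => rexp (-(1/2) * (v ⬝ᵥ v))) := by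
  have : Continuous fun v : Fin d → ℝ => v ⬝ᵥ v := by
    simp only [dotProduct]
    exact continuous_finset_sum _ fun i _ => (continuous_apply i).mul (continuous_apply i)
  exact Real.continuous_exp.comp (continuous_const.mul this)

include hA in
lemma map_sqrt_volume :
    Measure.map (Matrix.toLin' (CFC.sqrt A)) volume
      = ENNReal.ofReal |((CFC.sqrt A).det)⁻¹| • volume := by
  obtain ⟨-, -, -, hpos⟩ := sqrt_det_facts hA
  have h := Real.map_linearMap_volume_pi_eq_smul_volume_pi
    (f := Matrix.toLin' (CFC.sqrt A)) (by rw [LinearMap.det_toLin']; exact hpos.ne')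
  simpa [LinearMap.det_toLin'] using h

include hA in
lemma integrable_exp_quad (c : Fin d → ℝ) :
    Integrable (fun x : Fin d → ℝ => rexp (-(1/2) * ((x - c) ⬝ᵥ (A *ᵥ (x - c))))) := by
  obtain ⟨hBt, hBB, hdet, hpos⟩ := sqrt_det_facts hA
  set B := CFC.sqrt A
  have hφ : Measurable (Matrix.toLin' B) := (LinearMap.continuous_on_pi _).measurable
  have hg := gauss_cont (d := d)
  have h1 : Integrable (fun v : Fin d → ℝ => rexp (-(1/2) * (v ⬝ᵥ v)))
      (Measure.map (Matrix.toLin' B) volume) := by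
    rw [map_sqrt_volume hA]
    refine (integrable_smul_measure ?_ ?_).2 std_gauss_integrable
    · simp [abs_pos.2 (inv_ne_zero hpos.ne')]
      positivity
    · exact ENNReal.ofReal_ne_top
  have h2 : Integrable (fun x : Fin d → ℝ => rexp (-(1/2) * (x ⬝ᵥ (A *ᵥ x)))) := by
    have := (integrable_map_measure hg.aestronglyMeasurable hφ.aemeasurable).1 h1
    refine this.congr (Filter.Eventually.of_forall fun x => ?_)
    simp only [Function.comp_apply, Matrix.toLin'_apply]
    rw [quad_eq_sq hA]
  exact h2.comp_sub_right c

include hA in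
lemma integral_exp_quad (c : Fin d → ℝ) :
    ∫ x : Fin d → ℝ, rexp (-(1/2) * ((x - c) ⬝ᵥ (A *ᵥ (x - c))))
      = Real.sqrt (2*π) ^ d / Real.sqrt A.det := by
  obtain ⟨hBt, hBB, hdet, hpos⟩ := sqrt_det_facts hA
  set B := CFC.sqrt A
  have hφ : Measurable (Matrix.toLin' B) := (LinearMap.continuous_on_pi _).measurable
  have hg := gauss_cont (d := d)
  rw [integral_sub_right_eq_self (μ := volume)
    (fun x => rexp (-(1/2) * (x ⬝ᵥ (A *ᵥ x)))) c]
  have key : ∫ x : Fin d → ℝ, rexp (-(1/2) * (x ⬝ᵥ (A *ᵥ x)))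
      = ∫ v, rexp (-(1/2) * (v ⬝ᵥ v)) ∂(Measure.map (Matrix.toLin' B) volume) := by
    rw [integral_map hφ.aemeasurable hg.aestronglyMeasurable]
    congr 1
    funext x
    simp only [Matrix.toLin'_apply]
    rw [quad_eq_sq hA]
  rw [key, map_sqrt_volume hA, integral_smul_measure, std_gauss_integral,
    ENNReal.toReal_ofReal (abs_nonneg _), abs_of_pos (by positivity), smul_eq_mul, hdet]
  rw [div_eq_inv_mul]


lemma my_sqrt_pow {x : ℝ} (hx : 0 ≤ x) (n : ℕ) : Real.sqrt (x ^ n) = Real.sqrt x ^ n := by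
  induction n with
  | zero => simp
  | succ n ih => rw [pow_succ, pow_succ, Real.sqrt_mul (pow_nonneg hx n), ih]

lemma rpow_neg_half {z : ℝ} (hz : 0 ≤ z) : z ^ (-(1:ℝ)/2) = (Real.sqrt z)⁻¹ := by
  rw [show -(1:ℝ)/2 = -(1/2) by ring, Real.rpow_neg hz, ← Real.sqrt_eq_rpow]

variable {A S1 S2 : Matrix (Fin d) (Fin d) ℝ}

lemma integral_gaussPdf (hA : A.PosDef) (μ : Fin d → ℝ) :
    ∫ x : Fin d → ℝ, gaussPdf x μ A = 1 := by
  unfold gaussPdf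
  rw [MeasureTheory.integral_const_mul, integral_exp_quad hA.inv μ]
  have hdinv : (A⁻¹).det = A.det⁻¹ := by rw [Matrix.det_nonsing_inv, Ring.inverse_eq_inv]
  have hdet : (0:ℝ) < A.det := hA.det_pos
  rw [hdinv, Real.sqrt_inv, rpow_neg_half (by positivity), Fintype.card_fin,
    Real.sqrt_mul (by positivity), my_sqrt_pow (by positivity)]
  have h2π : (0:ℝ) < Real.sqrt (2*π) := Real.sqrt_pos.2 (by positivity)
  have hsd : (0:ℝ) < Real.sqrt A.det := Real.sqrt_pos.2 hdet
  field_simp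

lemma integrable_gaussPdf (hA : A.PosDef) (μ : Fin d → ℝ) :
    Integrable (fun x : Fin d → ℝ => gaussPdf x μ A) := by
  unfold gaussPdf
  exact (integrable_exp_quad hA.inv μ).const_mul _

lemma gaussPdf_mul (h1 : S1.PosDef) (h2 : S2.PosDef) (y m x : Fin d → ℝ) :
    gaussPdf y x S1 * gaussPdf x m S2 =
      gaussPdf y m (S1 + S2) *
        gaussPdf x ((S1⁻¹ + S2⁻¹)⁻¹ *ᵥ (S1⁻¹ *ᵥ y + S2⁻¹ *ᵥ m)) (S1⁻¹ + S2⁻¹)⁻¹ := by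
  have hApd := h1.inv
  have hBpd := h2.inv
  have hABpd := hApd.add hBpd
  have hAt : (S1⁻¹)ᵀ = S1⁻¹ := symm_of_posDef hApd
  have hBt : (S2⁻¹)ᵀ = S2⁻¹ := symm_of_posDef hBpd
  have hU : IsUnit (S1⁻¹ + S2⁻¹).det := hABpd.det_pos.ne'.isUnit
  have hU1 : IsUnit S1.det := h1.det_pos.ne'.isUnit
  have hU2 : IsUnit S2.det := h2.det_pos.ne'.isUnit
  have hsum : S2 * (S1⁻¹ + S2⁻¹) * S1 = S1 + S2 := by
    rw [Matrix.mul_add, Matrix.add_mul, Matrix.mul_nonsing_inv _ hU2, Matrix.mul_assoc,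
      Matrix.nonsing_inv_mul _ hU1, Matrix.mul_one, Matrix.one_mul, add_comm]
  have hK : S1⁻¹ * (S1⁻¹ + S2⁻¹)⁻¹ * S2⁻¹ = (S1 + S2)⁻¹ := by
    rw [← hsum, Matrix.mul_inv_rev, Matrix.mul_inv_rev, Matrix.mul_assoc]
  have hdinv : ((S1⁻¹ + S2⁻¹)⁻¹).det = ((S1⁻¹ + S2⁻¹).det)⁻¹ := by
    rw [Matrix.det_nonsing_inv, Ring.inverse_eq_inv]
  have hdet : S1.det * S2.det = (S1 + S2).det * ((S1⁻¹ + S2⁻¹)⁻¹).det := by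
    have hd1 : (S1 + S2).det = S2.det * (S1⁻¹ + S2⁻¹).det * S1.det := by
      rw [← hsum, Matrix.det_mul, Matrix.det_mul]
    rw [hd1, hdinv]
    have hcancel : (S1⁻¹ + S2⁻¹).det * ((S1⁻¹ + S2⁻¹).det)⁻¹ = 1 :=
      mul_inv_cancel₀ hABpd.det_pos.ne'
    linear_combination (-(S1.det * S2.det)) * hcancel
  have hinvinv : ((S1⁻¹ + S2⁻¹)⁻¹)⁻¹ = S1⁻¹ + S2⁻¹ := Matrix.nonsing_inv_nonsing_inv _ hU
  have hflip : (y - x) ⬝ᵥ (S1⁻¹ *ᵥ (y - x)) = (x - y) ⬝ᵥ (S1⁻¹ *ᵥ (x - y)) := by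
    rw [show y - x = -(x - y) from (neg_sub x y).symm, Matrix.mulVec_neg, dotProduct_neg,
      neg_dotProduct, neg_neg]
  have h2π : (0:ℝ) < 2 * π := by positivity
  unfold gaussPdf
  simp only [Fintype.card_fin]
  have hdS1 : (0:ℝ) < S1.det := h1.det_pos
  have hdS2 : (0:ℝ) < S2.det := h2.det_pos
  have hd12 : (0:ℝ) < (S1 + S2).det := (h1.add h2).det_pos
  have hdst : (0:ℝ) < ((S1⁻¹ + S2⁻¹)⁻¹).det := hABpd.inv.det_pos
  have hpw : (0:ℝ) < (2*π)^d := pow_pos h2π d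
  rw [mul_mul_mul_comm, mul_mul_mul_comm (((2*π)^d * (S1+S2).det) ^ (-(1:ℝ)/2))]
  congr 1
  · rw [← Real.mul_rpow (mul_pos hpw hdS1).le (mul_pos hpw hdS2).le,
      ← Real.mul_rpow (mul_pos hpw hd12).le (mul_pos hpw hdst).le]
    congr 1
    linear_combination ((2*π)^d * (2*π)^d) * hdet
  · rw [← Real.exp_add, ← Real.exp_add]
    congr 1
    rw [hflip, hinvinv, ← hK]
    have cs := complete_square hAt hBt hU y m x
    linear_combination (-(1:ℝ)/2) * cs

lemma integral_gaussPdf_mul (h1 : S1.PosDef) (h2 : S2.PosDef) (y m : Fin d → ℝ) :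
    ∫ x : Fin d → ℝ, gaussPdf y x S1 * gaussPdf x m S2 = gaussPdf y m (S1 + S2) := by
  have hst : ((S1⁻¹ + S2⁻¹)⁻¹).PosDef := (h1.inv.add h2.inv).inv
  simp_rw [gaussPdf_mul h1 h2 y m]
  rw [MeasureTheory.integral_const_mul, integral_gaussPdf hst, mul_one]

lemma integrable_gaussPdf_mul (h1 : S1.PosDef) (h2 : S2.PosDef) (y m : Fin d → ℝ) :
    Integrable (fun x : Fin d → ℝ => gaussPdf y x S1 * gaussPdf x m S2) := by
  have hst : ((S1⁻¹ + S2⁻¹)⁻¹).PosDef := (h1.inv.add h2.inv).inv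
  have := (integrable_gaussPdf hst
    ((S1⁻¹ + S2⁻¹)⁻¹ *ᵥ (S1⁻¹ *ᵥ y + S2⁻¹ *ᵥ m))).const_mul (gaussPdf y m (S1 + S2))
  refine this.congr (Filter.Eventually.of_forall fun x => ?_)
  exact (gaussPdf_mul h1 h2 y m x).symm

lemma const_sq {t : ℝ} (ht : 0 < t) (d : ℕ) :
    ((2*π)^d * t)⁻¹ = ((2*π)^d * ((1/2:ℝ)^d * t)) ^ (-(1:ℝ)/2)
      / (2^d * π ^ ((d:ℝ)/2) * t ^ ((1:ℝ)/2)) := by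
  have hbase : ((2:ℝ)*π)^d * ((1/2:ℝ)^d * t) = π^d * t := by
    rw [← mul_assoc, ← mul_pow, show (2:ℝ)*π*(1/2) = π by ring]
  have hπd : π ^ ((d:ℝ)/2) = Real.sqrt π ^ d := by
    rw [show ((d:ℝ)/2) = (d:ℝ) * (1/2) by ring, Real.rpow_mul pi_pos.le,
      Real.rpow_natCast, ← Real.sqrt_eq_rpow, my_sqrt_pow pi_pos.le]
  have ht2 : t ^ ((1:ℝ)/2) = Real.sqrt t := (Real.sqrt_eq_rpow _).symm
  rw [hbase, rpow_neg_half (by positivity), hπd, ht2,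
    Real.sqrt_mul (pow_nonneg pi_pos.le d), my_sqrt_pow pi_pos.le]
  rw [mul_pow (2:ℝ) π d]
  have h1 : Real.sqrt π ^ d * Real.sqrt π ^ d = π ^ d := by
    rw [← mul_pow, Real.mul_self_sqrt pi_pos.le]
  have h2 : Real.sqrt t * Real.sqrt t = t := Real.mul_self_sqrt ht.le
  have e2 : (2:ℝ)^d * π^d * t = (Real.sqrt π ^ d * Real.sqrt t)
      * (2^d * Real.sqrt π ^ d * Real.sqrt t) := by
    linear_combination (-((2:ℝ)^d * t)) * h1
      + (-((2:ℝ)^d * (Real.sqrt π ^ d * Real.sqrt π ^ d))) * h2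
  rw [div_eq_mul_inv, ← mul_inv, ← e2]

lemma gaussPdf_sq (hB : A.PosDef) (y x : Fin d → ℝ) :
    gaussPdf y x A ^ 2 =
      gaussPdf y x ((1/2 : ℝ) • A) / (2 ^ d * π ^ ((d:ℝ)/2) * A.det ^ ((1:ℝ)/2)) := by
  have hdet : (0:ℝ) < A.det := hB.det_pos
  have h2π : (0:ℝ) < 2 * π := by positivity
  have hUA : IsUnit A.det := hdet.ne'.isUnit
  have hinv : ((1/2 : ℝ) • A)⁻¹ = (2:ℝ) • A⁻¹ := by
    apply Matrix.inv_eq_right_inv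
    rw [Matrix.smul_mul, Matrix.mul_smul, smul_smul, Matrix.mul_nonsing_inv _ hUA]
    norm_num
  have hdsmul : ((1/2 : ℝ) • A).det = (1/2 : ℝ)^d * A.det := by
    rw [Matrix.det_smul, Fintype.card_fin]
  unfold gaussPdf
  simp only [Fintype.card_fin, hinv, hdsmul]
  rw [Matrix.smul_mulVec, dotProduct_smul, smul_eq_mul, mul_pow]
  have hexp : rexp (-(1/2) * ((y - x) ⬝ᵥ A⁻¹ *ᵥ (y - x))) ^ 2
      = rexp (-(1/2) * (2 * ((y - x) ⬝ᵥ A⁻¹ *ᵥ (y - x)))) := by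
    rw [sq, ← Real.exp_add]
    ring_nf
  rw [hexp]
  have hC : (((2*π)^d * A.det) ^ (-(1:ℝ)/2))^2 = ((2*π)^d * A.det)⁻¹ := by
    rw [rpow_neg_half (mul_pos (pow_pos h2π d) hdet).le, inv_pow,
      Real.sq_sqrt (mul_pos (pow_pos h2π d) hdet).le]
  rw [hC, const_sq hdet d]
  ring

lemma posDef_smul {M : Matrix (Fin d) (Fin d) ℝ} (h : M.PosDef) {c : ℝ} (hc : 0 < c) :
    (c • M).PosDef := by
  refine ⟨?_, fun x hx => ?_⟩
  · show (c • M)ᴴ = c • M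
    rw [Matrix.conjTranspose_smul, h.isHermitian.eq, star_trivial]
  · convert smul_pos hc (h.2 hx) using 1
    simp only [smul_eq_mul, Finsupp.mul_sum, Matrix.smul_apply, star_trivial]
    congr 1; funext i xi; congr 1; funext j xj; ring

theorem stmt16 {d : ℕ} (y m : Fin d → ℝ) (V S Φ : Matrix (Fin d) (Fin d) ℝ)
    (hV : V.PosDef) (hS : S.PosDef) (hΦ : Φ.PosDef) (hΦdiag : Φ.IsDiag)
    (hSΦ : (S - Φ).PosDef) :
    (∫ m' : Fin d → ℝ,
        (gaussPdf y m' ((1/2 : ℝ) • V + S - Φ) /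
            (2 ^ d * Real.pi ^ ((d : ℝ) / 2) * V.det ^ ((1:ℝ)/2))
          - (gaussPdf y m' (V + S - Φ)) ^ 2) * gaussPdf m' m Φ) =
      gaussPdf y m ((1/2 : ℝ) • V + S) /
          (2 ^ d * Real.pi ^ ((d : ℝ) / 2) * V.det ^ ((1:ℝ)/2))
        - gaussPdf y m ((1/2 : ℝ) • (V + S + Φ)) /
            (2 ^ d * Real.pi ^ ((d : ℝ) / 2) * (V + S - Φ).det ^ ((1:ℝ)/2)) := by
  have hC1 : ((1/2 : ℝ) • V + S - Φ).PosDef := by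
    rw [add_sub_assoc]
    exact (posDef_smul hV one_half_pos).add hSΦ
  have hC2 : (V + S - Φ).PosDef := by
    rw [add_sub_assoc]
    exact hV.add hSΦ
  have hC2h : ((1/2 : ℝ) • (V + S - Φ)).PosDef := posDef_smul hC2 one_half_pos
  set c0 := 2 ^ d * Real.pi ^ ((d : ℝ) / 2) * V.det ^ ((1:ℝ)/2) with hc0
  set c2 := 2 ^ d * Real.pi ^ ((d : ℝ) / 2) * (V + S - Φ).det ^ ((1:ℝ)/2) with hc2
  have hfun : (fun m' : Fin d → ℝ =>
      (gaussPdf y m' ((1/2 : ℝ) • V + S - Φ) / c0 - gaussPdf y m' (V + S - Φ) ^ 2)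
        * gaussPdf m' m Φ)
      = fun m' => c0⁻¹ * (gaussPdf y m' ((1/2 : ℝ) • V + S - Φ) * gaussPdf m' m Φ)
          - c2⁻¹ * (gaussPdf y m' ((1/2 : ℝ) • (V + S - Φ)) * gaussPdf m' m Φ) := by
    funext m'
    rw [gaussPdf_sq hC2 y m', ← hc2]
    ring
  rw [hfun, integral_sub
      ((integrable_gaussPdf_mul hC1 hΦ y m).const_mul _)
      ((integrable_gaussPdf_mul hC2h hΦ y m).const_mul _),
    MeasureTheory.integral_const_mul, MeasureTheory.integral_const_mul,
    integral_gaussPdf_mul hC1 hΦ y m, integral_gaussPdf_mul hC2h hΦ y m]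
  rw [show (1/2 : ℝ) • V + S - Φ + Φ = (1/2 : ℝ) • V + S from sub_add_cancel _ _]
  rw [show (1/2 : ℝ) • (V + S - Φ) + Φ = (1/2 : ℝ) • (V + S + Φ) by module]
  ring
end quad
end

section
/- For any positive-definite d×d matrices Σ, S and any positive-semidefinite diagonal Φ with S − Φ positive semidefinite, the expected updated posterior variance is no larger than the current posterior variance: f_N(y; m, Σ/2 + S)/(2^dπ^{d/2}|Σ|^{1/2}) − f_N(y; m, (Σ+S+Φ)/2)/(2^dπ^{d/2}|Σ+S−Φ|^{1/2}) ≤ f_N(y; m, Σ/2 + S)/(2^dπ^{d/2}|Σ|^{1/2}) − f_N(y; m, Σ + S)², with equality when Φ = 0. -/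
open Matrix MeasureTheory Real

section Aux
variable {n : Type*} [Fintype n] [DecidableEq n]

lemma symm_dot {A : Matrix n n ℝ} (hA : A.IsHermitian) (u v : n → ℝ) :
    u ⬝ᵥ A *ᵥ v = v ⬝ᵥ A *ᵥ u := by
  rw [dotProduct_mulVec, ← mulVec_transpose, dotProduct_comm]
  congr 1
  rw [← conjTranspose_eq_transpose_of_trivial, hA]

lemma cs_psd {A : Matrix n n ℝ} (hA : A.PosSemidef) (u v : n → ℝ) :
    (u ⬝ᵥ A *ᵥ v) ^ 2 ≤ (u ⬝ᵥ A *ᵥ u) * (v ⬝ᵥ A *ᵥ v) := by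
  have key : ∀ t : ℝ, 0 ≤ (v ⬝ᵥ A *ᵥ v) * (t * t) + (2 * (u ⬝ᵥ A *ᵥ v)) * t + (u ⬝ᵥ A *ᵥ u) := by
    intro t
    have h := hA.dotProduct_mulVec_nonneg (u + t • v)
    simp only [star_trivial, mulVec_add, mulVec_smul, dotProduct_add, add_dotProduct,
      dotProduct_smul, smul_dotProduct, smul_eq_mul] at h
    have hsym : v ⬝ᵥ A *ᵥ u = u ⬝ᵥ A *ᵥ v := symm_dot hA.isHermitian v u
    rw [hsym] at h
    nlinarith [h]
  have := discrim_le_zero key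
  simp only [discrim] at this
  nlinarith [this]

lemma quad_inv_le {A B : Matrix n n ℝ} (hA : A.PosDef) (hB : B.PosDef)
    (hAB : (B - A).PosSemidef) (z : n → ℝ) :
    z ⬝ᵥ B⁻¹ *ᵥ z ≤ z ⬝ᵥ A⁻¹ *ᵥ z := by
  have hAv : A *ᵥ (A⁻¹ *ᵥ z) = z := by
    rw [mulVec_mulVec, mul_nonsing_inv _ hA.det_pos.ne'.isUnit, one_mulVec]
  have hBu : B *ᵥ (B⁻¹ *ᵥ z) = z := by
    rw [mulVec_mulVec, mul_nonsing_inv _ hB.det_pos.ne'.isUnit, one_mulVec]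
  have hcs := cs_psd hA.posSemidef (B⁻¹ *ᵥ z) (A⁻¹ *ᵥ z)
  have huz : (B⁻¹ *ᵥ z) ⬝ᵥ z = z ⬝ᵥ B⁻¹ *ᵥ z := dotProduct_comm _ z
  have hvz : (A⁻¹ *ᵥ z) ⬝ᵥ z = z ⬝ᵥ A⁻¹ *ᵥ z := dotProduct_comm _ z
  rw [hAv, huz] at hcs
  have hAu_le : (B⁻¹ *ᵥ z) ⬝ᵥ A *ᵥ (B⁻¹ *ᵥ z) ≤ z ⬝ᵥ B⁻¹ *ᵥ z := by
    have h := hAB.dotProduct_mulVec_nonneg (B⁻¹ *ᵥ z)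
    simp only [star_trivial, sub_mulVec, dotProduct_sub] at h
    rw [hBu, huz] at h
    linarith
  have hAu_nn : 0 ≤ (B⁻¹ *ᵥ z) ⬝ᵥ A *ᵥ (B⁻¹ *ᵥ z) := hA.posSemidef.dotProduct_mulVec_nonneg (B⁻¹ *ᵥ z)
  have ha : 0 ≤ z ⬝ᵥ B⁻¹ *ᵥ z := hB.inv.posSemidef.dotProduct_mulVec_nonneg z
  have hb : 0 ≤ z ⬝ᵥ A⁻¹ *ᵥ z := hA.inv.posSemidef.dotProduct_mulVec_nonneg z
  rw [hvz] at hcs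
  rcases eq_or_lt_of_le ha with h0 | h0
  · linarith
  · nlinarith [mul_le_mul_of_nonneg_right hAu_le hb]

lemma det_le_one_of_le_one {Q : Matrix n n ℝ} (hQ : Q.PosSemidef)
    (h1 : (1 - Q).PosSemidef) : Q.det ≤ 1 := by
  have hH := hQ.isHermitian
  have heig : ∀ i, hH.eigenvalues i ≤ 1 := by
    intro i
    set v : n → ℝ := ⇑(hH.eigenvectorBasis i) with hv
    have hvne : v ≠ 0 := by
      have := hH.eigenvectorBasis.orthonormal.ne_zero i
      intro hc
      apply this
      ext j
      exact congrFun hc j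
    have hvv : 0 < v ⬝ᵥ v := by
      rcases lt_or_eq_of_le (dotProduct_star_self_nonneg v) with h | h
      · simpa using h
      · exact absurd (dotProduct_star_self_eq_zero.mp (by simpa using h.symm)) hvne
    have hmv : Q *ᵥ v = hH.eigenvalues i • v := hH.mulVec_eigenvectorBasis i
    have h := h1.dotProduct_mulVec_nonneg v
    simp only [star_trivial, sub_mulVec, one_mulVec, dotProduct_sub, hmv,
      dotProduct_smul, smul_eq_mul] at h
    nlinarith
  have hdet : Q.det = ∏ i, hH.eigenvalues i := by
    have := hH.det_eq_prod_eigenvalues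
    simpa using this
  rw [hdet]
  exact Finset.prod_le_one (fun i _ => hQ.eigenvalues_nonneg i) (fun i _ => heig i)

lemma det_mul_det_le {A Φ : Matrix n n ℝ} (hA : A.PosDef) (hΦ : Φ.PosSemidef)
    (hAΦ : (A - Φ).PosSemidef) : (A + Φ).det * (A - Φ).det ≤ A.det ^ 2 := by
  obtain ⟨R, hR, hRR⟩ : ∃ R : Matrix n n ℝ, R.PosSemidef ∧ R * R = A :=
    by open scoped MatrixOrder in exact ⟨CFC.sqrt A, (CFC.sqrt_nonneg A).posSemidef, CFC.sqrt_mul_sqrt_self A hA.posSemidef.nonneg⟩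
  have hdetR : R.det * R.det = A.det := by rw [← det_mul, hRR]
  have hdetRne : R.det ≠ 0 := by
    intro h; rw [h, mul_zero] at hdetR; exact hA.det_pos.ne' hdetR.symm
  have hRinv : R * R⁻¹ = 1 := mul_nonsing_inv _ hdetRne.isUnit
  have hRinv' : R⁻¹ * R = 1 := nonsing_inv_mul _ hdetRne.isUnit
  have hRiH : (R⁻¹)ᴴ = R⁻¹ := by rw [conjTranspose_nonsing_inv, hR.isHermitian.eq]
  set M := R⁻¹ * Φ * R⁻¹ with hMdef
  have hM : M.PosSemidef := by
    have := hΦ.mul_mul_conjTranspose_same R⁻¹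
    rwa [hRiH] at this
  have hone : R⁻¹ * A * R⁻¹ = 1 := by
    rw [← hRR, show R⁻¹ * (R * R) * R⁻¹ = (R⁻¹ * R) * (R * R⁻¹) by noncomm_ring,
      hRinv, hRinv', one_mul]
  have h1M : (1 - M : Matrix n n ℝ).PosSemidef := by
    have h := hAΦ.mul_mul_conjTranspose_same R⁻¹
    rw [hRiH] at h
    have e : R⁻¹ * (A - Φ) * R⁻¹ = 1 - M := by
      rw [Matrix.mul_sub, Matrix.sub_mul, hone, hMdef]
    rwa [e] at h
  have hMM : (M * M).PosSemidef := by
    have := Matrix.posSemidef_self_mul_conjTranspose M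
    rwa [hM.isHermitian.eq] at this
  have hMsub : (M - M * M).PosSemidef := by
    obtain ⟨T, hTps, hTT⟩ : ∃ T : Matrix n n ℝ, T.PosSemidef ∧ T * T = M :=
      by open scoped MatrixOrder in exact ⟨CFC.sqrt M, (CFC.sqrt_nonneg M).posSemidef, CFC.sqrt_mul_sqrt_self M hM.nonneg⟩
    have h := h1M.mul_mul_conjTranspose_same T
    rw [hTps.isHermitian.eq] at h
    have e : T * (1 - M) * T = M - M * M := by
      rw [← hTT]; noncomm_ring
    rwa [e] at h
  have h1MM : (1 - M * M : Matrix n n ℝ).PosSemidef := by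
    have h := h1M.add hMsub
    have e : ((1 - M) + (M - M * M) : Matrix n n ℝ) = 1 - M * M := by noncomm_ring
    rwa [e] at h
  have hQ : (1 - (1 - M * M) : Matrix n n ℝ).PosSemidef := by
    have e : (1 - (1 - M * M) : Matrix n n ℝ) = M * M := by noncomm_ring
    rw [e]; exact hMM
  have hdet1 : (1 - M * M : Matrix n n ℝ).det ≤ 1 := det_le_one_of_le_one h1MM hQ
  have hplus : A + Φ = R * (1 + M) * R := by
    have : R * M * R = Φ := by
      rw [hMdef, show R * (R⁻¹ * Φ * R⁻¹) * R = (R * R⁻¹) * Φ * (R⁻¹ * R) by noncomm_ring,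
        hRinv, hRinv', one_mul, mul_one]
    rw [Matrix.mul_add, Matrix.add_mul, mul_one, hRR, this]
  have hminus : A - Φ = R * (1 - M) * R := by
    have : R * M * R = Φ := by
      rw [hMdef, show R * (R⁻¹ * Φ * R⁻¹) * R = (R * R⁻¹) * Φ * (R⁻¹ * R) by noncomm_ring,
        hRinv, hRinv', one_mul, mul_one]
    rw [Matrix.mul_sub, Matrix.sub_mul, mul_one, hRR, this]
  have hfact : ((1 : Matrix n n ℝ) + M) * (1 - M) = 1 - M * M := by noncomm_ring
  have hcalc : (A + Φ).det * (A - Φ).det = A.det ^ 2 * (1 - M * M : Matrix n n ℝ).det := by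
    rw [hplus, hminus]
    simp only [det_mul]
    rw [← hfact, det_mul, ← hdetR]
    ring
  rw [hcalc]
  nlinarith [hA.det_pos]

lemma pi_pow_eq (d : ℕ) : (π:ℝ)^d = π ^ ((d:ℝ)/2) * π ^ ((d:ℝ)/2) := by
  rw [← Real.rpow_natCast π d, ← Real.rpow_add pi_pos]
  norm_num

lemma rpow_half_mul_self {a : ℝ} (ha : 0 < a) : a ^ ((1:ℝ)/2) * a ^ ((1:ℝ)/2) = a := by
  rw [← Real.rpow_add ha]
  norm_num

lemma sq_rpow_half {a : ℝ} (ha : 0 ≤ a) : (a ^ (2:ℕ)) ^ ((1:ℝ)/2) = a := by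
  rw [← Real.rpow_natCast a 2, ← Real.rpow_mul ha]
  norm_num

lemma scalar_eq (d : ℕ) (a q : ℝ) (ha : 0 < a) :
    ((π^d * a) ^ (-(1:ℝ)/2) * Real.exp (-q)) / (2^d * π ^ ((d:ℝ)/2) * a ^ ((1:ℝ)/2))
      = ((2*π)^d * a)⁻¹ * Real.exp (-q) := by
  have hp : (0:ℝ) < π ^ ((d:ℝ)/2) := Real.rpow_pos_of_pos pi_pos _
  have hA : (0:ℝ) < a ^ ((1:ℝ)/2) := Real.rpow_pos_of_pos ha _
  have hsplit : (π^d * a) ^ (-(1:ℝ)/2) = (π ^ ((d:ℝ)/2) * a ^ ((1:ℝ)/2))⁻¹ := by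
    rw [show (-(1:ℝ)/2) = -(1/2 : ℝ) by norm_num, Real.rpow_neg (by positivity),
      Real.mul_rpow (by positivity) ha.le]
    congr 2
    rw [← Real.rpow_natCast π d, ← Real.rpow_mul Real.pi_pos.le, mul_one_div]
  rw [hsplit, mul_pow]
  rw [div_eq_iff (by positivity)]
  have haA : a = a ^ ((1:ℝ)/2) * a ^ ((1:ℝ)/2) := (rpow_half_mul_self ha).symm
  rw [pi_pow_eq d]
  nth_rewrite 2 [haA]
  have hp2 : (π : ℝ) ^ ((d:ℝ)/2) ≠ 0 := hp.ne'
  have hA2 : a ^ ((1:ℝ)/2) ≠ 0 := hA.ne'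
  field_simp

lemma scalar_ineq (d : ℕ) (a b c qA qB : ℝ) (ha : 0 < a) (hb : 0 < b) (hc : 0 < c)
    (hdet : b * c ≤ a^2) (hq : qB ≤ qA) :
    ((2*π)^d * a)⁻¹ * Real.exp (-qA)
      ≤ ((π^d * b) ^ (-(1:ℝ)/2) * Real.exp (-qB)) / (2^d * π ^ ((d:ℝ)/2) * c ^ ((1:ℝ)/2)) := by
  have hp : (0:ℝ) < π ^ ((d:ℝ)/2) := Real.rpow_pos_of_pos pi_pos _
  have hB : (0:ℝ) < b ^ ((1:ℝ)/2) := Real.rpow_pos_of_pos hb _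
  have hC : (0:ℝ) < c ^ ((1:ℝ)/2) := Real.rpow_pos_of_pos hc _
  have hsplit : (π^d * b) ^ (-(1:ℝ)/2) = (π ^ ((d:ℝ)/2) * b ^ ((1:ℝ)/2))⁻¹ := by
    rw [show (-(1:ℝ)/2) = -(1/2 : ℝ) by norm_num, Real.rpow_neg (by positivity),
      Real.mul_rpow (by positivity) hb.le]
    congr 2
    rw [← Real.rpow_natCast π d, ← Real.rpow_mul Real.pi_pos.le, mul_one_div]
  have hkey : b ^ ((1:ℝ)/2) * c ^ ((1:ℝ)/2) ≤ a := by
    have h1 : (b*c) ^ ((1:ℝ)/2) ≤ (a^(2:ℕ)) ^ ((1:ℝ)/2) :=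
      Real.rpow_le_rpow (by positivity) hdet (by norm_num)
    rwa [Real.mul_rpow hb.le hc.le, sq_rpow_half ha.le] at h1
  have hexp : Real.exp (-qA) ≤ Real.exp (-qB) := Real.exp_le_exp.2 (by linarith)
  rw [hsplit, mul_pow, le_div_iff₀ (by positivity)]
  have hmain : a⁻¹ * c ^ ((1:ℝ)/2) * Real.exp (-qA)
      ≤ (b ^ ((1:ℝ)/2))⁻¹ * Real.exp (-qB) := by
    apply mul_le_mul _ hexp (Real.exp_pos _).le (by positivity)
    rw [inv_eq_one_div (b ^ ((1:ℝ)/2)), le_div_iff₀ hB]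
    have h2 : a⁻¹ * c ^ ((1:ℝ)/2) * b ^ ((1:ℝ)/2) = a⁻¹ * (b ^ ((1:ℝ)/2) * c ^ ((1:ℝ)/2)) := by
      ring
    rw [h2]
    calc a⁻¹ * (b ^ ((1:ℝ)/2) * c ^ ((1:ℝ)/2)) ≤ a⁻¹ * a :=
          mul_le_mul_of_nonneg_left hkey (by positivity)
      _ = 1 := inv_mul_cancel₀ ha.ne'
  calc (2^d * π^d * a)⁻¹ * Real.exp (-qA) * (2^d * π ^ ((d:ℝ)/2) * c ^ ((1:ℝ)/2))
      = (π ^ ((d:ℝ)/2))⁻¹ * (a⁻¹ * c ^ ((1:ℝ)/2) * Real.exp (-qA)) := by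
        rw [pi_pow_eq d]
        field_simp
    _ ≤ (π ^ ((d:ℝ)/2))⁻¹ * ((b ^ ((1:ℝ)/2))⁻¹ * Real.exp (-qB)) :=
        mul_le_mul_of_nonneg_left hmain (by positivity)
    _ = (π ^ ((d:ℝ)/2) * b ^ ((1:ℝ)/2))⁻¹ * Real.exp (-qB) := by
        rw [mul_inv]
        ring

end Aux

lemma gaussPdf_half {d : ℕ} (y m : Fin d → ℝ) {B : Matrix (Fin d) (Fin d) ℝ}
    (hB : B.PosDef) :
    gaussPdf y m ((1/2:ℝ) • B)
      = (π^d * B.det) ^ (-(1:ℝ)/2) * Real.exp (-((y - m) ⬝ᵥ B⁻¹ *ᵥ (y - m))) := by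
  unfold gaussPdf
  have hcard : Fintype.card (Fin d) = d := Fintype.card_fin d
  have hdet : ((1/2:ℝ) • B).det = (1/2:ℝ)^d * B.det := by
    rw [det_smul, hcard]
  have hinv : ((1/2:ℝ) • B)⁻¹ = (2:ℝ) • B⁻¹ := by
    apply inv_eq_right_inv
    rw [Matrix.smul_mul, Matrix.mul_smul, mul_nonsing_inv _ hB.det_pos.ne'.isUnit,
      smul_smul]
    norm_num
  rw [hdet, hinv, hcard]
  have hbase : (2 * π)^d * ((1/2:ℝ)^d * B.det) = π^d * B.det := by
    rw [← mul_assoc, ← mul_pow, show (2 * π * (1/2:ℝ)) = π by ring]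
  rw [hbase]
  congr 1
  rw [smul_mulVec, dotProduct_smul, smul_eq_mul]
  ring_nf

lemma gaussPdf_sq_s17 {d : ℕ} (y m : Fin d → ℝ) {A : Matrix (Fin d) (Fin d) ℝ}
    (hA : A.PosDef) :
    (gaussPdf y m A)^2
      = ((2*π)^d * A.det)⁻¹ * Real.exp (-((y - m) ⬝ᵥ A⁻¹ *ᵥ (y - m))) := by
  unfold gaussPdf
  rw [Fintype.card_fin]
  have hpos : (0:ℝ) < (2*π)^d * A.det := mul_pos (by positivity) hA.det_pos
  have h1 : (((2*π)^d * A.det) ^ (-(1:ℝ)/2))^(2:ℕ) = ((2*π)^d * A.det)⁻¹ := by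
    rw [← Real.rpow_natCast (((2*π)^d * A.det) ^ (-(1:ℝ)/2)) 2, ← Real.rpow_mul hpos.le]
    norm_num [Real.rpow_neg_one]
  have h2 : (Real.exp (-(1/2) * ((y - m) ⬝ᵥ A⁻¹ *ᵥ (y - m))))^(2:ℕ)
      = Real.exp (-((y - m) ⬝ᵥ A⁻¹ *ᵥ (y - m))) := by
    rw [sq, ← Real.exp_add]
    congr 1
    ring
  rw [mul_pow, h1, h2]

theorem stmt17 {d : ℕ} (y m : Fin d → ℝ) (V S Φ : Matrix (Fin d) (Fin d) ℝ)
    (hV : V.PosDef) (hS : S.PosDef) (hΦ : Φ.PosSemidef) (hΦdiag : Φ.IsDiag)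
    (hSΦ : (S - Φ).PosSemidef) :
    (gaussPdf y m ((1/2 : ℝ) • V + S) /
        (2 ^ d * Real.pi ^ ((d : ℝ) / 2) * V.det ^ ((1:ℝ)/2))
      - gaussPdf y m ((1/2 : ℝ) • (V + S + Φ)) /
          (2 ^ d * Real.pi ^ ((d : ℝ) / 2) * (V + S - Φ).det ^ ((1:ℝ)/2))
      ≤ gaussPdf y m ((1/2 : ℝ) • V + S) /
          (2 ^ d * Real.pi ^ ((d : ℝ) / 2) * V.det ^ ((1:ℝ)/2))
        - (gaussPdf y m (V + S)) ^ 2) ∧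
    (Φ = 0 →
      gaussPdf y m ((1/2 : ℝ) • V + S) /
          (2 ^ d * Real.pi ^ ((d : ℝ) / 2) * V.det ^ ((1:ℝ)/2))
        - gaussPdf y m ((1/2 : ℝ) • (V + S + Φ)) /
            (2 ^ d * Real.pi ^ ((d : ℝ) / 2) * (V + S - Φ).det ^ ((1:ℝ)/2))
        = gaussPdf y m ((1/2 : ℝ) • V + S) /
            (2 ^ d * Real.pi ^ ((d : ℝ) / 2) * V.det ^ ((1:ℝ)/2))
          - (gaussPdf y m (V + S)) ^ 2) := by
  have hA : (V + S).PosDef := hV.add hS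
  have hB : (V + S + Φ).PosDef := hA.add_posSemidef hΦ
  have hC : (V + S - Φ).PosDef := by
    have h := hV.add_posSemidef hSΦ
    rwa [← add_sub_assoc] at h
  constructor
  · apply sub_le_sub_left
    rw [gaussPdf_sq_s17 y m hA, gaussPdf_half y m hB]
    apply scalar_ineq d _ _ _ _ _ hA.det_pos hB.det_pos hC.det_pos
    · exact det_mul_det_le hA hΦ hC.posSemidef
    · have hsub : (V + S + Φ) - (V + S) = Φ := add_sub_cancel_left _ _
      apply quad_inv_le hA hB
      rw [hsub]
      exact hΦ
  · intro h0
    subst h0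
    rw [sub_zero, add_zero, gaussPdf_half y m hA, gaussPdf_sq_s17 y m hA,
      scalar_eq d _ _ hA.det_pos]
end
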